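/- Let R = GF(2)[c]/(c³) and S = R[[d]]. Then 1 + c + c² + d is a unit in S, and for every natural number i the coefficient of d^i in (1 + c)·(1 + c + c² + d)^{-1} equals: 1 + c² if i ≡ 0 (mod 4); 1 + c + c² if i ≡ 1 (mod 4); 1 if i ≡ 2 (mod 4); and 1 + c if i ≡ 3 (mod 4). -/

import Mathlib

/-! In characteristic 2 with `c³ = 0`, `1 + c + c²` is the inverse of `1 + c`, so
`1 + c + c² + d = u - d` for the unit `u = (1 + c)⁻¹`, whose inverse is the geometric series
`∑ (1 + c)ⁿ⁺¹ dⁿ`. Multiplying by `1 + c` gives the coefficients `(1 + c)ⁱ⁺²`, which are periodic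
with period 4 since `(1 + c)⁴ = 1 + c⁴ = 1`. -/

open Polynomial PowerSeries

noncomputable section

/-- The ring `R = GF(2)[c] / (c³)`. -/
abbrev R2 : Type := AdjoinRoot (Polynomial.X ^ 3 : Polynomial (ZMod 2))

/-- The class of the variable `c` in `R = GF(2)[c] / (c³)`. -/
def cR : R2 := AdjoinRoot.root _

/-- The power series ring `S = R[[d]]`. -/
abbrev S2 : Type := PowerSeries R2

/-- The image of `c` in `S = R[[d]]`. -/
def cS : S2 := PowerSeries.C cR

/-- The variable `d` of `S = R[[d]]`. -/
def dS : S2 := PowerSeries.X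

/-- The coefficient of `c²` of an element of `R = GF(2)[c] / (c³)`,
computed via the unique representative polynomial of degree `< 3`. -/
def coefc2 (x : R2) : ZMod 2 :=
  (AdjoinRoot.modByMonicHom (Polynomial.monic_X_pow 3) x).coeff 2

section CharTwo

variable {A : Type*} [CommRing A] {c : A}

theorem one_add_mul_one_add_add_sq (h2 : (2 : A) = 0) (hc : c ^ 3 = 0) :
    (1 + c) * (1 + c + c ^ 2) = 1 := by
  linear_combination hc + (c + c ^ 2) * h2

theorem one_add_pow_four (h2 : (2 : A) = 0) (hc : c ^ 4 = 0) : (1 + c) ^ 4 = 1 := by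
  linear_combination hc + (2 * c + 3 * c ^ 2 + 2 * c ^ 3) * h2

end CharTwo

namespace PowerSeries

variable {A : Type*} [CommRing A]

theorem isUnit_C_sub_X (u : Aˣ) : IsUnit (C (u : A) - X) :=
  .of_mul_eq_one_right _ (invUnitsSub_mul_sub u)

theorem inverse_C_sub_X (u : Aˣ) : Ring.inverse (C (u : A) - X) = invUnitsSub u := by
  rw [← one_mul (Ring.inverse _), eq_comm,
    Ring.eq_mul_inverse_iff_mul_eq _ _ _ (isUnit_C_sub_X u), invUnitsSub_mul_sub]

end PowerSeries

theorem two_eq_zero_R2 : (2 : R2) = 0 := by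
  rw [← map_ofNat (algebraMap (ZMod 2) R2) 2, show (2 : ZMod 2) = 0 from rfl, map_zero]

theorem cR_pow_three : cR ^ 3 = 0 := by
  rw [cR, ← AdjoinRoot.mk_X, ← map_pow, AdjoinRoot.mk_self]

def oneAddCRAddSqUnit : R2ˣ where
  val := 1 + cR + cR ^ 2
  inv := 1 + cR
  val_inv := by rw [mul_comm]; exact one_add_mul_one_add_add_sq two_eq_zero_R2 cR_pow_three
  inv_val := one_add_mul_one_add_add_sq two_eq_zero_R2 cR_pow_three

theorem one_add_cS_add_sq_add_dS :
    1 + cS + cS ^ 2 + dS = PowerSeries.C (oneAddCRAddSqUnit : R2) - PowerSeries.X := by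
  have h2 : (2 : S2) = 0 := by rw [← map_ofNat PowerSeries.C 2, two_eq_zero_R2, map_zero]
  simp only [cS, dS, oneAddCRAddSqUnit, Units.val_mk, map_add, map_one, map_pow]
  linear_combination PowerSeries.X * h2

theorem one_add_cR_pow_add_two (i : ℕ) :
    (1 + cR) ^ (i + 2) =
      if i % 4 = 0 then 1 + cR ^ 2
      else if i % 4 = 1 then 1 + cR + cR ^ 2
      else if i % 4 = 2 then 1
      else 1 + cR := by
  have h2 := two_eq_zero_R2
  have h3 := cR_pow_three
  have h4 : cR ^ 4 = 0 := by rw [pow_succ, h3, zero_mul]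
  rw [pow_eq_pow_mod _ (one_add_pow_four h2 h4)]
  obtain h | h | h | h : i % 4 = 0 ∨ i % 4 = 1 ∨ i % 4 = 2 ∨ i % 4 = 3 := by omega
  · rw [show (i + 2) % 4 = 2 by omega, if_pos h]
    linear_combination cR * h2
  · rw [show (i + 2) % 4 = 3 by omega, if_neg (by omega), if_pos h]
    linear_combination h3 + (cR + cR ^ 2) * h2
  · rw [show (i + 2) % 4 = 0 by omega, if_neg (by omega), if_neg (by omega), if_pos h, pow_zero]
  · rw [show (i + 2) % 4 = 1 by omega, if_neg (by omega), if_neg (by omega), if_neg (by omega),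
      pow_one]

theorem inverse_mul_coeffs :
    IsUnit (1 + cS + cS ^ 2 + dS) ∧
      ∀ i : ℕ,
        PowerSeries.coeff i ((1 + cS) * Ring.inverse (1 + cS + cS ^ 2 + dS)) =
          if i % 4 = 0 then 1 + cR ^ 2
          else if i % 4 = 1 then 1 + cR + cR ^ 2
          else if i % 4 = 2 then 1
          else 1 + cR := by
  rw [one_add_cS_add_sq_add_dS, PowerSeries.inverse_C_sub_X]
  refine ⟨PowerSeries.isUnit_C_sub_X _, fun i => ?_⟩
  rw [show (1 + cS : S2) = PowerSeries.C (1 + cR) by simp [cS], PowerSeries.coeff_C_mul, coeff_invUnitsSub,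
    one_divp, ← inv_pow, Units.val_pow_eq_pow_val]
  exact (pow_succ' _ (i + 1)).symm.trans (one_add_cR_pow_add_two i)

end
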